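/- arXiv:1708.09117 — 3 statements merged into one kernel-verified Lean document; each statement's English description precedes it below -/
import Mathlib

section
/- For every integer L ≥ 1 and every real μ_R ∈ [0,1], the optimal value of the linear program minimize ∑_{r=0}^{L-1} [L·C(L-1,r) + C(L-1,r+1)]·a_r over nonnegative reals a_0,…,a_L subject to L·∑_{r=0}^{L} C(L,r)·a_r = 1 and L·∑_{r=1}^{L} C(L-1,r-1)·a_r ≤ μ_R, is at least 1 - μ_R. -/
theorem stmt4 (L : ℕ) (hL : 1 ≤ L) (μ : ℝ) (hμ0 : 0 ≤ μ) (hμ1 : μ ≤ 1)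
    (a : ℕ → ℝ) (hpos : ∀ r, 0 ≤ a r)
    (hc1 : (L : ℝ) * ∑ r ∈ Finset.range (L + 1), (L.choose r : ℝ) * a r = 1)
    (hc2 : (L : ℝ) * ∑ r ∈ Finset.Icc 1 L, (((L - 1).choose (r - 1)) : ℝ) * a r ≤ μ) :
    ∑ r ∈ Finset.range L,
        ((L : ℝ) * ((L - 1).choose r) + ((L - 1).choose (r + 1))) * a r ≥ 1 - μ := by
  have hLpos : (0:ℝ) ≤ (L:ℝ) := by positivity
  -- rewrite the Icc sum as a range sum
  have hIcc : ∑ r ∈ Finset.Icc 1 L, (((L - 1).choose (r - 1)) : ℝ) * a r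
      = ∑ i ∈ Finset.range L, (((L - 1).choose i) : ℝ) * a (i + 1) := by
    rw [show Finset.Icc 1 L = Finset.Ico 1 (L+1) by rw [Finset.Ico_add_one_right_eq_Icc],
      Finset.sum_Ico_eq_sum_range]
    simp [add_comm 1]
  have hsucc : L - 1 + 1 = L := Nat.succ_pred_eq_of_pos hL
  have hsplit : ∑ r ∈ Finset.range (L + 1), (L.choose r : ℝ) * a r
      = (∑ i ∈ Finset.range L, (L.choose (i + 1) : ℝ) * a (i + 1)) + a 0 := by
    rw [Finset.sum_range_succ']; simp
  have key : (L : ℝ) * ∑ r ∈ Finset.range L, (((L - 1).choose r) : ℝ) * a r ≥ 1 - μ := by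
    have hdiff : (L : ℝ) * ∑ r ∈ Finset.range (L + 1), (L.choose r : ℝ) * a r
        - (L : ℝ) * ∑ r ∈ Finset.Icc 1 L, (((L - 1).choose (r - 1)) : ℝ) * a r
        = (L : ℝ) * ∑ r ∈ Finset.range L, (((L - 1).choose r) : ℝ) * a r := by
      rw [hIcc, hsplit, ← mul_sub]
      congr 1
      have hpascal : ∀ i, (L.choose (i + 1) : ℝ)
          = ((L - 1).choose i : ℝ) + ((L - 1).choose (i + 1) : ℝ) := by
        intro i
        rw [← hsucc, Nat.choose_succ_succ]
        push_cast; ring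
      have : (∑ i ∈ Finset.range L, (L.choose (i + 1) : ℝ) * a (i + 1)) + a 0
          - ∑ i ∈ Finset.range L, (((L - 1).choose i) : ℝ) * a (i + 1)
          = (∑ i ∈ Finset.range L, (((L - 1).choose (i + 1)) : ℝ) * a (i + 1)) + a 0 := by
        rw [add_sub_right_comm, ← Finset.sum_sub_distrib]
        congr 1
        apply Finset.sum_congr rfl
        intro i _
        rw [hpascal i]; ring
      rw [this]
      -- now fold back into a range (L+1) sum and drop the top zero term
      have h2 : (∑ i ∈ Finset.range L, (((L - 1).choose (i + 1)) : ℝ) * a (i + 1)) + a 0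
          = ∑ r ∈ Finset.range (L + 1), (((L - 1).choose r) : ℝ) * a r := by
        rw [Finset.sum_range_succ']; simp
      rw [h2, Finset.sum_range_succ, Nat.choose_eq_zero_of_lt (by omega)]
      simp
    have h1 : (1:ℝ) - μ ≤ (L : ℝ) * ∑ r ∈ Finset.range (L + 1), (L.choose r : ℝ) * a r
        - (L : ℝ) * ∑ r ∈ Finset.Icc 1 L, (((L - 1).choose (r - 1)) : ℝ) * a r := by
      rw [hc1]; linarith
    linarith [hdiff ▸ h1]
  calc ∑ r ∈ Finset.range L,
        ((L : ℝ) * ((L - 1).choose r) + ((L - 1).choose (r + 1))) * a r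
      ≥ ∑ r ∈ Finset.range L, (L : ℝ) * (((L - 1).choose r) : ℝ) * a r := by
        apply Finset.sum_le_sum
        intro i _
        have := hpos i
        have h0 : (0:ℝ) ≤ ((L - 1).choose (i + 1) : ℝ) := by positivity
        nlinarith
    _ = (L : ℝ) * ∑ r ∈ Finset.range L, (((L - 1).choose r) : ℝ) * a r := by
        rw [Finset.mul_sum]; simp [mul_assoc]
    _ ≥ 1 - μ := key
end

section
/- For integers L ≥ 1 and any nonnegative reals a_0,…,a_L with L·∑_{r=0}^{L} C(L,r)·a_r = 1 and L·∑_{r=1}^{L} C(L-1,r-1)·a_r ≤ μ_R, the objective satisfies ∑_{r=0}^{L-1}[L·C(L-1,r)+C(L-1,r+1)]·a_r ≥ (1/2)·∑_{r=0}^{L-1} 2L·C(L-1,r)·a_r ≥ ... ≥ (1-μ_R); in particular the ratio of the LP optimal value to (1-μ_R) lies in [1, 2) for all μ_R ∈ [0,1). -/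
/-!
Pascal's rule splits the normalisation sum `∑ C(L,r) a_r` into `∑_{r<L} C(L-1,r) a_r` plus the
cache sum `∑_{r≥1} C(L-1,r-1) a_r`, so the two constraints give
`L ∑_{r<L} C(L-1,r) a_r ≥ 1 - μ`, and the objective dominates this sum term by term.
Conversely, the allocation with mass `(1-μ)/L` at `r = 0` and `μ/L` at `r = L` is feasible and
has objective `(2L-1)(1-μ)/L < 2(1-μ)`.
-/

open Finset

section

variable {R : Type*} [NonAssocSemiring R]

theorem sum_Icc_one_choose_pred_mul (n : ℕ) (a : ℕ → R) :
    ∑ r ∈ Icc 1 (n + 1), (n.choose (r - 1) : R) * a r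
      = ∑ i ∈ range (n + 1), (n.choose i : R) * a (i + 1) := by
  rw [← Ico_add_one_right_eq_Icc, sum_Ico_eq_sum_range]
  simp [add_comm]

theorem sum_range_choose_mul_eq_add {L : ℕ} (hL : 1 ≤ L) (a : ℕ → R) :
    ∑ r ∈ range (L + 1), (L.choose r : R) * a r
      = ∑ r ∈ range L, ((L - 1).choose r : R) * a r
        + ∑ r ∈ Icc 1 L, ((L - 1).choose (r - 1) : R) * a r := by
  obtain ⟨n, rfl⟩ := Nat.exists_eq_add_of_le' hL
  rw [Nat.add_sub_cancel, sum_Icc_one_choose_pred_mul,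
    sum_range_succ' (fun r => ((n + 1).choose r : R) * a r),
    sum_range_succ' (fun r => (n.choose r : R) * a r)]
  simp only [Nat.choose_succ_succ', Nat.cast_add, add_mul, sum_add_distrib, Nat.choose_zero_right]
  rw [sum_range_succ (fun i => (n.choose (i + 1) : R) * a (i + 1)), Nat.choose_succ_self,
    Nat.cast_zero, zero_mul, add_zero]
  abel

theorem sum_mul_add_pi_single (s : Finset ℕ) (w : ℕ → R) (i j : ℕ) (x y : R) :
    ∑ r ∈ s, w r * (Pi.single i x + Pi.single j y : ℕ → R) r
      = (if i ∈ s then w i * x else 0) + (if j ∈ s then w j * y else 0) := by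
  simp [Pi.single_apply, mul_add, sum_add_distrib]

end

theorem one_sub_le_sum_range_mul {L : ℕ} (hL : 1 ≤ L) {μ : ℝ} {a : ℕ → ℝ} (ha : ∀ r, 0 ≤ a r)
    (hload : (L : ℝ) * ∑ r ∈ range (L + 1), (L.choose r : ℝ) * a r = 1)
    (hcache : (L : ℝ) * ∑ r ∈ Icc 1 L, ((L - 1).choose (r - 1) : ℝ) * a r ≤ μ) :
    1 - μ ≤ ∑ r ∈ range L, ((L : ℝ) * (L - 1).choose r + (L - 1).choose (r + 1)) * a r := by
  rw [sum_range_choose_mul_eq_add hL, mul_add] at hload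
  calc 1 - μ ≤ (L : ℝ) * ∑ r ∈ range L, ((L - 1).choose r : ℝ) * a r := by linarith
    _ = ∑ r ∈ range L, (L : ℝ) * (L - 1).choose r * a r := by
      rw [mul_sum]
      simp only [mul_assoc]
    _ ≤ _ := sum_le_sum fun r _ => by
      rw [add_mul]
      exact le_add_of_nonneg_right (mul_nonneg (Nat.cast_nonneg _) (ha r))

theorem exists_feasible_sum_range_mul_lt {L : ℕ} (hL : 1 ≤ L) {μ : ℝ} (hμ0 : 0 ≤ μ)
    (hμ1 : μ < 1) :
    ∃ a : ℕ → ℝ, (∀ r, 0 ≤ a r) ∧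
      (L : ℝ) * ∑ r ∈ range (L + 1), (L.choose r : ℝ) * a r = 1 ∧
      (L : ℝ) * ∑ r ∈ Icc 1 L, ((L - 1).choose (r - 1) : ℝ) * a r ≤ μ ∧
      ∑ r ∈ range L, ((L : ℝ) * (L - 1).choose r + (L - 1).choose (r + 1)) * a r
        < 2 * (1 - μ) := by
  have hLpos : (0 : ℝ) < L := by exact_mod_cast hL
  have hL0 : L ≠ 0 := by omega
  have hx : 0 ≤ (1 - μ) / L := div_nonneg (by linarith) hLpos.le
  have hy : 0 ≤ μ / L := div_nonneg hμ0 hLpos.le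
  set a : ℕ → ℝ := Pi.single 0 ((1 - μ) / L) + Pi.single L (μ / L) with ha
  have hhead : ∑ r ∈ range L, ((L - 1).choose r : ℝ) * a r = (1 - μ) / L := by
    rw [ha, sum_mul_add_pi_single]
    simp [hL0]
  have hcache : ∑ r ∈ Icc 1 L, ((L - 1).choose (r - 1) : ℝ) * a r = μ / L := by
    rw [ha, sum_mul_add_pi_single]
    simp [hL]
  refine ⟨a, fun r => ?_, ?_, ?_, ?_⟩
  · exact (add_nonneg (Pi.single_nonneg.2 hx) (Pi.single_nonneg.2 hy) : (0 : ℕ → ℝ) ≤ a) r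
  · rw [sum_range_choose_mul_eq_add hL, hhead, hcache]
    field_simp
    ring
  · rw [hcache, mul_div_cancel₀ _ hLpos.ne']
  · rw [ha, sum_mul_add_pi_single]
    simp only [mem_range, Nat.pos_of_ne_zero hL0, lt_irrefl, if_true, if_false, add_zero,
      Nat.choose_zero_right, zero_add, Nat.choose_one_right]
    rw [Nat.cast_sub hL, mul_div_assoc', div_lt_iff₀ hLpos]
    push_cast
    nlinarith

theorem stmt15_general (L : ℕ) (hL : 1 ≤ L) (μ : ℝ) (hμ0 : 0 ≤ μ) :
    (∀ a : ℕ → ℝ, (∀ r, 0 ≤ a r) →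
      (L : ℝ) * ∑ r ∈ Finset.range (L + 1), (L.choose r : ℝ) * a r = 1 →
      (L : ℝ) * ∑ r ∈ Finset.Icc 1 L, (((L - 1).choose (r - 1)) : ℝ) * a r ≤ μ →
      ∑ r ∈ Finset.range L,
          ((L : ℝ) * ((L - 1).choose r) + ((L - 1).choose (r + 1))) * a r ≥ 1 - μ) ∧
    (μ < 1 → ∃ a : ℕ → ℝ, (∀ r, 0 ≤ a r) ∧
      (L : ℝ) * ∑ r ∈ Finset.range (L + 1), (L.choose r : ℝ) * a r = 1 ∧
      (L : ℝ) * ∑ r ∈ Finset.Icc 1 L, (((L - 1).choose (r - 1)) : ℝ) * a r ≤ μ ∧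
      ∑ r ∈ Finset.range L,
          ((L : ℝ) * ((L - 1).choose r) + ((L - 1).choose (r + 1))) * a r <
        2 * (1 - μ)) :=
  ⟨fun _ ha hload hcache => one_sub_le_sum_range_mul hL ha hload hcache,
    fun hμ1 => exists_feasible_sum_range_mul_lt hL hμ0 hμ1⟩

theorem stmt15 (L : ℕ) (hL : 1 ≤ L) (μ : ℝ) (hμ0 : 0 ≤ μ) (hμ1 : μ ≤ 1) :
    (∀ a : ℕ → ℝ, (∀ r, 0 ≤ a r) →
      (L : ℝ) * ∑ r ∈ Finset.range (L + 1), (L.choose r : ℝ) * a r = 1 →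
      (L : ℝ) * ∑ r ∈ Finset.Icc 1 L, (((L - 1).choose (r - 1)) : ℝ) * a r ≤ μ →
      ∑ r ∈ Finset.range L,
          ((L : ℝ) * ((L - 1).choose r) + ((L - 1).choose (r + 1))) * a r ≥ 1 - μ) ∧
    (μ < 1 → ∃ a : ℕ → ℝ, (∀ r, 0 ≤ a r) ∧
      (L : ℝ) * ∑ r ∈ Finset.range (L + 1), (L.choose r : ℝ) * a r = 1 ∧
      (L : ℝ) * ∑ r ∈ Finset.Icc 1 L, (((L - 1).choose (r - 1)) : ℝ) * a r ≤ μ ∧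
      ∑ r ∈ Finset.range L,
          ((L : ℝ) * ((L - 1).choose r) + ((L - 1).choose (r + 1))) * a r <
        2 * (1 - μ)) :=
  stmt15_general L hL μ hμ0
end

section
/- In the expanded partially connected linear network with transmitters indexed by 0,…,K+L-2 and (virtual plus actual) receivers indexed by -L+1,…,K+L-2, where transmitter j connects to receivers R_j^e = {j-L+1, …, j}: for every actual receiver i ∈ {0,…,K-1}, every p ∈ {0,…,L-1}, and every Q ⊆ {0,…,L-1}\{i mod L} with |Q| = r, there exists exactly one transmitter j ∈ {i, i+1, …, i+L-1} with j mod L = p, and there exists a set R ⊆ R_j^e with |R| = r+1, i ∈ R, and (R \ {i}) mod L = Q. -/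
lemma stmt16_aux (L a j j' : ℤ) (hL : 0 < L) (h1 : a ≤ j) (h1' : j ≤ a + L - 1)
    (h2 : a ≤ j') (h2' : j' ≤ a + L - 1) (h : j % L = j' % L) : j = j' := by
  have hd : L ∣ j - j' := Int.dvd_of_emod_eq_zero (by
    rw [Int.sub_emod, h, sub_self, Int.zero_emod])
  have := Int.eq_zero_of_abs_lt_dvd hd (by rw [abs_lt]; constructor <;> linarith)
  linarith

theorem stmt16 (K L : ℤ) (r : ℕ) (i p : ℤ) (hK : 1 ≤ K) (hL : 1 ≤ L)
    (hrL : (r : ℤ) ≤ L - 1)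
    (hi : i ∈ Finset.Icc (0 : ℤ) (K - 1)) (hp : p ∈ Finset.Icc (0 : ℤ) (L - 1))
    (Q : Finset ℤ) (hQ : Q ⊆ (Finset.Icc (0 : ℤ) (L - 1)).erase (i % L))
    (hQcard : Q.card = r) :
    (∃! j : ℤ, j ∈ Finset.Icc i (i + L - 1) ∧ j % L = p) ∧
    (∀ j ∈ Finset.Icc i (i + L - 1), j % L = p →
      ∃ R ⊆ Finset.Icc (j - L + 1) j, i ∈ R ∧ R.card = r + 1 ∧
        (R.erase i).image (fun x => x % L) = Q) := by
  simp only [Finset.mem_Icc] at hi hp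
  have hL0 : (0:ℤ) < L := by linarith
  constructor
  · refine ⟨i + (p - i) % L, ⟨Finset.mem_Icc.mpr ⟨?_, ?_⟩, ?_⟩, ?_⟩
    · have := Int.emod_nonneg (p - i) (by omega : L ≠ 0); linarith
    · have := Int.emod_lt_of_pos (p - i) hL0; linarith
    · have h1 : (i + (p - i) % L) % L = p % L := by
        conv_rhs => rw [show p = i + (p - i) by ring]
        rw [Int.add_emod, Int.add_emod i (p - i), Int.emod_emod_of_dvd _ dvd_rfl]
      rw [h1, Int.emod_eq_of_lt hp.1 (by linarith)]
    · rintro j ⟨hj, hjp⟩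
      rw [Finset.mem_Icc] at hj
      have hc1 : i ≤ i + (p - i) % L := by
        have := Int.emod_nonneg (p - i) (by omega : L ≠ 0); linarith
      have hc2 : i + (p - i) % L ≤ i + L - 1 := by
        have := Int.emod_lt_of_pos (p - i) hL0; linarith
      have hcm : (i + (p - i) % L) % L = p := by
        have h1 : (i + (p - i) % L) % L = p % L := by
          conv_rhs => rw [show p = i + (p - i) by ring]
          rw [Int.add_emod, Int.add_emod i (p - i), Int.emod_emod_of_dvd _ dvd_rfl]
        rw [h1, Int.emod_eq_of_lt hp.1 (by linarith)]
      exact stmt16_aux L i j _ hL0 hj.1 hj.2 hc1 hc2 (by rw [hjp, hcm])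
  · intro j hj hjp
    rw [Finset.mem_Icc] at hj
    set f : ℤ → ℤ := fun q => j - (j - q) % L with hf
    have hfmem : ∀ q, j - L + 1 ≤ f q ∧ f q ≤ j := by
      intro q
      have h1 := Int.emod_nonneg (j - q) (by omega : L ≠ 0)
      have h2 := Int.emod_lt_of_pos (j - q) hL0
      constructor <;> simp only [hf] <;> linarith
    have hQ' : ∀ q ∈ Q, 0 ≤ q ∧ q ≤ L - 1 ∧ q ≠ i % L := by
      intro q hq
      have := hQ hq
      rw [Finset.mem_erase, Finset.mem_Icc] at this
      exact ⟨this.2.1, this.2.2, this.1⟩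
    have hfmod : ∀ q ∈ Q, f q % L = q := by
      intro q hq
      obtain ⟨h1, h2, _⟩ := hQ' q hq
      have : f q % L = (j - (j - q)) % L := by
        simp only [hf]
        rw [Int.sub_emod, Int.emod_emod_of_dvd _ dvd_rfl, ← Int.sub_emod]
      rw [this, sub_sub_cancel]
      exact Int.emod_eq_of_lt h1 (by linarith)
    have hinotin : i ∉ Q.image f := by
      rintro hmem
      obtain ⟨q, hq, heq⟩ := Finset.mem_image.mp hmem
      obtain ⟨_, _, hne⟩ := hQ' q hq
      apply hne
      rw [← hfmod q hq, heq]
    have hinj : Set.InjOn f Q := by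
      intro a ha b hb hab
      rw [← hfmod a ha, ← hfmod b hb, hab]
    refine ⟨insert i (Q.image f), ?_, Finset.mem_insert_self _ _, ?_, ?_⟩
    · intro x hx
      rw [Finset.mem_insert] at hx
      rw [Finset.mem_Icc]
      rcases hx with rfl | hx
      · constructor <;> linarith
      · obtain ⟨q, hq, rfl⟩ := Finset.mem_image.mp hx
        exact hfmem q
    · rw [Finset.card_insert_of_notMem hinotin,
        Finset.card_image_of_injOn hinj, hQcard]
    · rw [Finset.erase_insert hinotin, Finset.image_image]
      rw [show ((fun x => x % L) ∘ f) = fun q => f q % L from rfl]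
      rw [Finset.image_congr (fun q hq => hfmod q hq)]
      exact Finset.image_id
end
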